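/- arXiv:2604.11124 — 3 statements merged into one kernel-verified Lean document; each statement's English description precedes it below -/
import Mathlib

section
/- The double-well function f(X) = |X−I|²·|X+I|² on n×n real matrices equals |X|^4 + (n−2)/2·|X+Xᵀ|² + (n+2)/2·|X−Xᵀ|² + 8·∑_{i<j}(X_{ij}X_{ji} − X_{ii}X_{jj}) + n². -/
open Matrix

private lemma tri_sum {n : ℕ} (g : Fin n → Fin n → ℝ) :
    ∑ i, ∑ j, g i j =
      (∑ i, g i i) + ∑ i, ∑ j, (if i < j then g i j + g j i else 0) := by
  have h2 : ∀ i j : Fin n,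
      g i j = (if i = j then g i j else 0) + (if i < j then g i j else 0)
        + (if j < i then g i j else 0) := by
    intro i j
    rcases lt_trichotomy i j with h | h | h
    · simp [h, h.ne, asymm h]
    · simp [h, lt_irrefl]
    · simp [h, h.ne', asymm h]
  have hd : ∑ i : Fin n, ∑ j, (if i = j then g i j else 0) = ∑ i, g i i := by
    refine Finset.sum_congr rfl fun i _ => ?_
    simp
  have h1 : ∑ i : Fin n, ∑ j, (if j < i then g i j else 0)
      = ∑ i, ∑ j, (if i < j then g j i else 0) := Finset.sum_comm
  have hsum : ∑ i : Fin n, ∑ j,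
        ((if i < j then g i j else 0) + (if i < j then g j i else 0))
      = ∑ i, ∑ j, (if i < j then g i j + g j i else 0) := by
    refine Finset.sum_congr rfl fun i _ => Finset.sum_congr rfl fun j _ => ?_
    split <;> simp
  calc ∑ i, ∑ j, g i j
      = ∑ i, ∑ j, ((if i = j then g i j else 0) + (if i < j then g i j else 0)
        + (if j < i then g i j else 0)) :=
        Finset.sum_congr rfl fun i _ => Finset.sum_congr rfl fun j _ => h2 i j
    _ = (∑ i, ∑ j, (if i = j then g i j else 0))
        + (∑ i, ∑ j, (if i < j then g i j else 0))
        + (∑ i, ∑ j, (if j < i then g i j else 0)) := by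
        simp [Finset.sum_add_distrib]
    _ = (∑ i, g i i) + ∑ i, ∑ j, (if i < j then g i j + g j i else 0) := by
        rw [hd, h1, ← hsum]
        simp only [Finset.sum_add_distrib]
        ring

/-- The double-well function `|X−I|²|X+I|²` equals
`|X|⁴ + (n−2)/2 |X+Xᵀ|² + (n+2)/2 |X−Xᵀ|² + 8 ∑_{i<j}(X_{ij}X_{ji} − X_{ii}X_{jj}) + n²`. -/
theorem stmt3 (n : ℕ) (X : Matrix (Fin n) (Fin n) ℝ) :
    (∑ i, ∑ j, ((X - 1) i j) ^ 2) * (∑ i, ∑ j, ((X + 1) i j) ^ 2) =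
      (∑ i, ∑ j, (X i j) ^ 2) ^ 2
      + ((n : ℝ) - 2) / 2 * (∑ i, ∑ j, ((X + Xᵀ) i j) ^ 2)
      + ((n : ℝ) + 2) / 2 * (∑ i, ∑ j, ((X - Xᵀ) i j) ^ 2)
      + 8 * (∑ i, ∑ j ∈ Finset.univ.filter (fun j => i < j),
          (X i j * X j i - X i i * X j j))
      + (n : ℝ) ^ 2 := by
  have hminus : ∑ i, ∑ j, ((X - 1) i j) ^ 2
      = (∑ i, ∑ j, (X i j) ^ 2) - 2 * (∑ i, X i i) + n := by
    have h : ∀ i j : Fin n, ((X - 1) i j) ^ 2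
        = X i j ^ 2 + (if i = j then -2 * X i j + 1 else 0) := by
      intro i j
      simp only [Matrix.sub_apply, Matrix.one_apply]
      split <;> ring
    simp only [h, Finset.sum_add_distrib]
    have h2 : ∀ i : Fin n, (∑ j, if i = j then -2 * X i j + 1 else 0)
        = -2 * X i i + 1 := fun i => by simp
    rw [Finset.sum_congr rfl fun i _ => h2 i, Finset.sum_add_distrib,
      Finset.sum_const, Finset.card_univ, Fintype.card_fin, nsmul_eq_mul,
      ← Finset.mul_sum]
    ring
  have hplus : ∑ i, ∑ j, ((X + 1) i j) ^ 2
      = (∑ i, ∑ j, (X i j) ^ 2) + 2 * (∑ i, X i i) + n := by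
    have h : ∀ i j : Fin n, ((X + 1) i j) ^ 2
        = X i j ^ 2 + (if i = j then 2 * X i j + 1 else 0) := by
      intro i j
      simp only [Matrix.add_apply, Matrix.one_apply]
      split <;> ring
    simp only [h, Finset.sum_add_distrib]
    have h2 : ∀ i : Fin n, (∑ j, if i = j then 2 * X i j + 1 else 0)
        = 2 * X i i + 1 := fun i => by simp
    rw [Finset.sum_congr rfl fun i _ => h2 i, Finset.sum_add_distrib,
      Finset.sum_const, Finset.card_univ, Fintype.card_fin, nsmul_eq_mul,
      ← Finset.mul_sum]
    ring
  have h1 : ∑ i, ∑ j, (X j i) ^ 2 = ∑ i, ∑ j, (X i j) ^ 2 := Finset.sum_comm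
  have hsym : ∑ i, ∑ j, ((X + Xᵀ) i j) ^ 2
      = 2 * (∑ i, ∑ j, (X i j) ^ 2) + 2 * (∑ i, ∑ j, X i j * X j i) := by
    have h : ∀ i j : Fin n, ((X + Xᵀ) i j) ^ 2
        = X i j ^ 2 + X j i ^ 2 + 2 * (X i j * X j i) := by
      intro i j; simp only [Matrix.add_apply, Matrix.transpose_apply]; ring
    simp only [h, Finset.sum_add_distrib]
    have h2 : ∑ i, ∑ j, 2 * (X i j * X j i)
        = 2 * (∑ i, ∑ j, X i j * X j i) := by simp [Finset.mul_sum]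
    rw [h1, h2]; ring
  have hanti : ∑ i, ∑ j, ((X - Xᵀ) i j) ^ 2
      = 2 * (∑ i, ∑ j, (X i j) ^ 2) - 2 * (∑ i, ∑ j, X i j * X j i) := by
    have h : ∀ i j : Fin n, ((X - Xᵀ) i j) ^ 2
        = X i j ^ 2 + X j i ^ 2 - 2 * (X i j * X j i) := by
      intro i j; simp only [Matrix.sub_apply, Matrix.transpose_apply]; ring
    simp only [h, Finset.sum_sub_distrib, Finset.sum_add_distrib]
    have h2 : ∑ i, ∑ j, 2 * (X i j * X j i)
        = 2 * (∑ i, ∑ j, X i j * X j i) := by simp [Finset.mul_sum]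
    rw [h1, h2]; ring
  have hcross : ∑ i, ∑ j ∈ Finset.univ.filter (fun j => i < j),
      (X i j * X j i - X i i * X j j)
      = ((∑ i, ∑ j, X i j * X j i) - ∑ i, (X i i) ^ 2) / 2
        - ((∑ i, X i i) ^ 2 - ∑ i, (X i i) ^ 2) / 2 := by
    simp only [Finset.sum_filter]
    have t1 := tri_sum (fun i j => X i j * X j i)
    have t2 := tri_sum (fun i j => X i i * X j j)
    have hDD : ∑ i, X i i * X i i = ∑ i, (X i i) ^ 2 :=
      Finset.sum_congr rfl fun i _ => (sq (X i i)).symm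
    have ht2 : ∑ i, ∑ j, X i i * X j j = (∑ i, X i i) ^ 2 := by
      rw [sq, Finset.sum_mul_sum]
    rw [hDD] at t1
    rw [hDD, ht2] at t2
    have key : ∀ i j : Fin n,
        (if i < j then X i j * X j i - X i i * X j j else 0)
        = ((if i < j then X i j * X j i + X j i * X i j else 0)
          - (if i < j then X i i * X j j + X j j * X i i else 0)) / 2 := by
      intro i j; split <;> ring
    simp only [key, ← Finset.sum_div, Finset.sum_sub_distrib]
    linarith [t1, t2]
  rw [hminus, hplus, hsym, hanti, hcross]
  ring
end

section
/- For n = 2, the double-well function f(X) = |X−I|²|X+I|² on 2×2 matrices satisfies f(X) = 4 + 4(X₂₁ − X₁₂)² + (X₁₁² + X₂₁² + X₁₂² + X₂₂²)² − 8·det X; consequently f(X) ≥ 4 − 8·det X for all X ∈ ℝ^{2×2}. -/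
/-- Squared Frobenius norm of a 2×2 matrix. -/
noncomputable def frob2 (X : Matrix (Fin 2) (Fin 2) ℝ) : ℝ :=
  X 0 0 ^ 2 + X 1 0 ^ 2 + X 0 1 ^ 2 + X 1 1 ^ 2

/-- For `n = 2`, `|X−I|²|X+I|² = 4 + 4(X₂₁−X₁₂)² + (X₁₁²+X₂₁²+X₁₂²+X₂₂²)² − 8 det X`;
consequently `|X−I|²|X+I|² ≥ 4 − 8 det X`. -/
theorem stmt5 (X : Matrix (Fin 2) (Fin 2) ℝ) :
    frob2 (X - 1) * frob2 (X + 1)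
        = 4 + 4 * (X 1 0 - X 0 1) ^ 2
          + (X 0 0 ^ 2 + X 1 0 ^ 2 + X 0 1 ^ 2 + X 1 1 ^ 2) ^ 2 - 8 * X.det
    ∧ 4 - 8 * X.det ≤ frob2 (X - 1) * frob2 (X + 1) := by
  have hdet : X.det = X 0 0 * X 1 1 - X 0 1 * X 1 0 := by
    rw [Matrix.det_fin_two]
  have key : frob2 (X - 1) * frob2 (X + 1)
      = 4 + 4 * (X 1 0 - X 0 1) ^ 2
        + (X 0 0 ^ 2 + X 1 0 ^ 2 + X 0 1 ^ 2 + X 1 1 ^ 2) ^ 2 - 8 * X.det := by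
    simp only [frob2, Matrix.sub_apply, Matrix.add_apply, Matrix.one_apply_eq,
      Matrix.one_apply_ne (by decide : (0 : Fin 2) ≠ 1),
      Matrix.one_apply_ne (by decide : (1 : Fin 2) ≠ 0), hdet]
    ring
  refine ⟨key, ?_⟩
  rw [key]
  nlinarith [sq_nonneg (X 1 0 - X 0 1), sq_nonneg (X 0 0 ^ 2 + X 1 0 ^ 2 + X 0 1 ^ 2 + X 1 1 ^ 2)]
end

section
/- For f : ℝ^{m×n} → ℝ ∪ {+∞} bounded below, the function φ(X) := inf {∫ f dμ : μ a probability measure with ∫ p dμ = p(X)} satisfies φ(X) ≤ f(X) for every X, and φ ≥ h for every polyconvex function h with h ≤ f. In particular φ equals the polyconvex envelope of f. -/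
/-!
Testing with `δ_X` gives `ψ (p X) ≤ f X`. Conversely, a polyconvex `g ∘ p ≤ f` stays below `ψ` by
Jensen's inequality `g (∫ p dμ) ≤ ∫ g ∘ p dμ`, which has to be proved by hand because `g` may take
the value `+∞` and need not be measurable. Let `W` be the least subspace containing `p - ∫ p dμ`
almost surely, and `r < g (∫ p dμ)`. Inside the flat `∫ p dμ + W`, the point `(∫ p dμ, r)` is
properly separated from the epigraph of `g`. A non-vertical separating hyperplane is an affine
minorant of `g` whose integral against `μ` is `r`; a vertical one either cuts off a set of positive
mass on which `g ∘ p = +∞`, or forces `p` into a smaller subspace, contradicting the choice of `W`.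
Finally `ψ` is itself polyconvex, since mixing admissible measures is again admissible, hence it is
the largest polyconvex minorant of `f`.
-/

open MeasureTheory ENNReal

/-- Index type for the minors of an `m × n` matrix: pairs of row/column subsets
of equal cardinality (the empty pair giving the constant minor 1). -/
abbrev MinorIdx (m n : ℕ) : Type :=
  {st : Finset (Fin m) × Finset (Fin n) // st.1.card = st.2.card}

/-- The vector of all minors of a matrix, indexed by `MinorIdx m n`. -/
noncomputable def minors {m n : ℕ} (X : Matrix (Fin m) (Fin n) ℝ) (ι : MinorIdx m n) : ℝ :=
  (X.submatrix (ι.val.1.orderEmbOfFin rfl) (ι.val.2.orderEmbOfFin ι.property.symm)).det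

instance matMS (m n : ℕ) : MeasurableSpace (Matrix (Fin m) (Fin n) ℝ) :=
  inferInstanceAs (MeasurableSpace (Fin m → Fin n → ℝ))

/-- `EReal` to `ℝ≥0∞`, sending `⊤` to `⊤` and negatives to `0`. -/
noncomputable def er2e (x : EReal) : ℝ≥0∞ :=
  if x = ⊤ then ⊤ else ENNReal.ofReal x.toReal

/-- Integral of an `ℝ ∪ {+∞}`-valued function `f` bounded below by `c`
against a (probability) measure `μ`; equals `+∞` if `f` is not `μ`-integrable. -/
noncomputable def intE {m n : ℕ} (f : Matrix (Fin m) (Fin n) ℝ → EReal) (c : ℝ)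
    (μ : Measure (Matrix (Fin m) (Fin n) ℝ)) : EReal :=
  (((∫⁻ Z, er2e (f Z - (c : EReal)) ∂μ) : ℝ≥0∞) : EReal) + (c : EReal)

/-- The polyconvexification functional
`ψ(q) = inf {∫ f dμ : μ probability measure, ∫ p dμ = q}`. -/
noncomputable def psiF {m n : ℕ} (f : Matrix (Fin m) (Fin n) ℝ → EReal) (c : ℝ)
    (q : MinorIdx m n → ℝ) : EReal :=
  sInf {v : EReal | ∃ μ : Measure (Matrix (Fin m) (Fin n) ℝ),
    IsProbabilityMeasure μ ∧
    (∀ ι, Integrable (fun Z => minors Z ι) μ) ∧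
    (∀ ι, (∫ Z, minors Z ι ∂μ) = q ι) ∧
    v = intE f c μ}

section Separation

variable {E : Type*} [NormedAddCommGroup E] [NormedSpace ℝ E]

theorem Convex.exists_dual_le_and_lt_of_notMem_interior {s : Set E} (hs : Convex ℝ s)
    (hsi : (interior s).Nonempty) {x : E} (hx : x ∉ interior s) :
    ∃ ψ : StrongDual ℝ E, (∀ y ∈ s, ψ y ≤ ψ x) ∧ ∃ y ∈ s, ψ y < ψ x := by
  obtain ⟨ψ, hψ⟩ := geometric_hahn_banach_open_point hs.interior isOpen_interior hx
  obtain ⟨y₀, hy₀⟩ := hsi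
  have hcl : closure s ⊆ {y | ψ y ≤ ψ x} := by
    rw [← hs.closure_interior_eq_closure_of_nonempty_interior ⟨y₀, hy₀⟩]
    exact closure_minimal (fun y hy => (hψ y hy).le) (isClosed_le ψ.continuous continuous_const)
  exact ⟨ψ, fun y hy => hcl (subset_closure hy), y₀, interior_subset hy₀, hψ y₀ hy₀⟩

lemma LinearMap.apply_nonpos_of_forall_le {V : Type*} [AddCommGroup V] [Module ℝ V]
    (ψ : V →ₗ[ℝ] ℝ) {y v : V} {b : ℝ} (h : ∀ t : ℝ, 0 ≤ t → ψ (y + t • v) ≤ b) : ψ v ≤ 0 := by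
  by_contra! hv
  have hy : ψ y ≤ b := by simpa using h 0 le_rfl
  have := h ((b - ψ y) / ψ v + 1) (by positivity)
  rw [map_add, map_smul, smul_eq_mul, add_mul, div_mul_cancel₀ _ hv.ne'] at this
  linarith

open Pointwise in
/-- Where `s` has empty interior, it is thickened by a complement of the direction of its affine
span. -/
theorem Convex.exists_dual_le_and_lt_of_notMem [FiniteDimensional ℝ E] {s : Set E}
    (hs : Convex ℝ s) (hne : s.Nonempty) {x : E} (hx : x ∉ s) :
    ∃ ψ : StrongDual ℝ E, (∀ y ∈ s, ψ y ≤ ψ x) ∧ ∃ y ∈ s, ψ y < ψ x := by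
  set P := affineSpan ℝ s
  by_cases hxP : x ∉ P
  · obtain ⟨ψ, u, hψP, hux⟩ :=
      geometric_hahn_banach_closed_point P.convex P.closed_of_finiteDimensional hxP
    obtain ⟨y, hy⟩ := hne
    exact ⟨ψ, fun z hz => (hψP z (subset_affineSpan ℝ s hz)).le.trans hux.le, y, hy,
      (hψP y (subset_affineSpan ℝ s hy)).trans hux⟩
  rw [not_not] at hxP
  obtain ⟨C, hC⟩ := P.direction.exists_isCompl
  set T := s + (C : Set E)
  have hsC : s ⊆ T := fun y hy => ⟨y, hy, 0, C.zero_mem, add_zero y⟩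
  have hxsC : x ∉ interior T := by
    rintro hx'
    obtain ⟨y, hy, c, hc, rfl⟩ := interior_subset hx'
    have hcP : c ∈ P.direction := by
      simpa using P.vsub_mem_direction hxP (subset_affineSpan ℝ s hy)
    obtain rfl : c = 0 := Submodule.disjoint_def.mp hC.disjoint c hcP hc
    exact hx (by simpa using hy)
  have hint : (interior T).Nonempty := by
    obtain ⟨y, hy⟩ := hne
    rw [(hs.add C.convex : Convex ℝ T).interior_nonempty_iff_affineSpan_eq_top,
      ← AffineSubspace.direction_eq_top_iff_of_nonempty ⟨y, subset_affineSpan ℝ _ (hsC hy)⟩,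
      eq_top_iff, ← hC.sup_eq_top]
    refine sup_le (AffineSubspace.direction_le (affineSpan_mono ℝ hsC)) fun c hc => ?_
    simpa using AffineSubspace.vsub_mem_direction
      (subset_affineSpan ℝ T ⟨y, hy, c, hc, rfl⟩) (subset_affineSpan ℝ _ (hsC hy))
  obtain ⟨ψ, hψ, _, ⟨y, hy, c, hc, rfl⟩, hlt⟩ :=
    (hs.add C.convex : Convex ℝ T).exists_dual_le_and_lt_of_notMem_interior hint hxsC
  have hψc : ψ c = 0 := by
    have hline : ∀ v ∈ C, ∀ t : ℝ, 0 ≤ t → ψ (y + t • v) ≤ ψ x := fun v hv t _ =>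
      hψ _ ⟨y, hy, t • v, C.smul_mem t hv, rfl⟩
    have h₁ := ψ.toLinearMap.apply_nonpos_of_forall_le (hline c hc)
    have h₂ := ψ.toLinearMap.apply_nonpos_of_forall_le (hline (-c) (C.neg_mem hc))
    simp only [ContinuousLinearMap.coe_coe, map_neg, neg_nonpos] at h₁ h₂
    exact le_antisymm h₁ h₂
  exact ⟨ψ, fun z hz => hψ z (hsC hz), y, hy, by simpa [hψc] using hlt⟩

end Separation

theorem Filter.exists_least_submodule_eventually_mem {α R M : Type*} [Ring R] [AddCommGroup M]
    [Module R M] [IsArtinian R M] (l : Filter α) (v : α → M) :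
    ∃ W : Submodule R M, (∀ᶠ x in l, v x ∈ W) ∧
      ∀ K : Submodule R M, (∀ᶠ x in l, v x ∈ K) → W ≤ K := by
  obtain ⟨W, hW, hmin⟩ :=
    wellFounded_lt.has_min {W : Submodule R M | ∀ᶠ x in l, v x ∈ W} ⟨⊤, by simp⟩
  refine ⟨W, hW, fun K hK => ?_⟩
  have hWK : W ⊓ K ∈ {W : Submodule R M | ∀ᶠ x in l, v x ∈ W} :=
    (hW.and hK).mono fun x hx => hx
  exact inf_eq_left.mp (eq_of_le_of_not_lt inf_le_left (hmin _ hWK))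

def ERealConvex {E : Type*} [AddCommGroup E] [Module ℝ E] (g : E → EReal) : Prop :=
  ∀ a b : E, ∀ lam : ℝ, 0 ≤ lam → lam ≤ 1 →
    g (lam • a + (1 - lam) • b) ≤ (lam : EReal) * g a + ((1 - lam : ℝ) : EReal) * g b

lemma ERealConvex.convex_epigraph {E : Type*} [AddCommGroup E] [Module ℝ E] {g : E → EReal}
    (hg : ERealConvex g) : Convex ℝ {z : E × ℝ | g z.1 ≤ z.2} := by
  intro x hx y hy a b ha hb hab
  obtain rfl : b = 1 - a := by linarith
  calc g (a • x.1 + (1 - a) • y.1) ≤ (a : EReal) * g x.1 + ((1 - a : ℝ) : EReal) * g y.1 :=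
        hg _ _ a ha (by linarith)
    _ ≤ (a : EReal) * x.2 + ((1 - a : ℝ) : EReal) * y.2 :=
        add_le_add (mul_le_mul_of_nonneg_left hx (EReal.coe_nonneg.mpr ha))
          (mul_le_mul_of_nonneg_left hy (EReal.coe_nonneg.mpr hb))
    _ = ((a • x + (1 - a) • y).2 : ℝ) := by simp [EReal.coe_add, EReal.coe_mul]

lemma ERealConvex.coe_ennreal_add_const {E : Type*} [AddCommGroup E] [Module ℝ E]
    {J : E → ℝ≥0∞} (hJ : ∀ a b : E, ∀ lam : ℝ, 0 < lam → lam < 1 →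
      J (lam • a + (1 - lam) • b) ≤ ENNReal.ofReal lam * J a + ENNReal.ofReal (1 - lam) * J b)
    (c : ℝ) : ERealConvex fun q => (J q : EReal) + c := by
  intro a b lam h0 h1
  rcases h0.eq_or_lt with rfl | h0
  · simp
  rcases h1.eq_or_lt with rfl | h1
  · simp
  have hc : (c : EReal) = (lam * c : ℝ) + ((1 - lam) * c : ℝ) := by
    rw [← EReal.coe_add]; ring_nf
  calc (J (lam • a + (1 - lam) • b) : EReal) + c
      ≤ ((ENNReal.ofReal lam * J a + ENNReal.ofReal (1 - lam) * J b : ℝ≥0∞) : EReal) + c := by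
        gcongr
        exact EReal.coe_ennreal_le_coe_ennreal_iff.mpr (hJ a b lam h0 h1)
    _ = (lam : EReal) * (J a + c) + ((1 - lam : ℝ) : EReal) * (J b + c) := by
        rw [EReal.left_distrib_of_nonneg_of_ne_top (EReal.coe_nonneg.mpr h0.le)
            (EReal.coe_ne_top _),
          EReal.left_distrib_of_nonneg_of_ne_top (EReal.coe_nonneg.mpr (sub_nonneg.mpr h1.le))
            (EReal.coe_ne_top _), ← EReal.coe_mul, ← EReal.coe_mul, hc]
        simp only [EReal.coe_ennreal_add, EReal.coe_ennreal_mul, EReal.coe_ennreal_ofReal,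
          max_eq_left h0.le, max_eq_left (sub_nonneg.mpr h1.le)]
        abel

section LowerIntegral

variable {α : Type*} [MeasurableSpace α] {μ : Measure α}

/-- `F` need not be measurable, so its integral is only approached from below, through integrable
minorants. -/
def LeLowerIntegral (μ : Measure α) (F : α → EReal) (r : ℝ) : Prop :=
  ∃ w : α → ℝ, Integrable w μ ∧ (∀ᵐ x ∂μ, (w x : EReal) ≤ F x) ∧ r ≤ ∫ x, w x ∂μ

variable [IsProbabilityMeasure μ]

lemma leLowerIntegral_of_ae_eq_top {F : α → EReal} {c : ℝ} (hc : ∀ x, (c : EReal) ≤ F x)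
    {A : Set α} (hA : NullMeasurableSet A μ) (hμA : μ A ≠ 0) (hF : ∀ᵐ x ∂μ, x ∈ A → F x = ⊤)
    (r : ℝ) : LeLowerIntegral μ F r := by
  have hμA' : μ.real A ≠ 0 := (measureReal_ne_zero_iff (measure_ne_top μ A)).mpr hμA
  set K := max 0 (r - c) / μ.real A
  refine ⟨fun x => c + A.indicator (fun _ => K) x,
    (integrable_const c).add ((integrable_const K).indicator₀ hA), hF.mono fun x hx => ?_, ?_⟩
  · by_cases hxA : x ∈ A
    · simp [hx hxA]
    · simpa [hxA] using hc x
  · rw [integral_add (integrable_const c) ((integrable_const K).indicator₀ hA),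
      integral_indicator₀ hA, setIntegral_const]
    simp only [integral_const, probReal_univ, smul_eq_mul, one_mul, K, mul_div_cancel₀ _ hμA']
    linarith [le_max_right 0 (r - c)]

variable {E : Type*} [NormedAddCommGroup E] [NormedSpace ℝ E] [CompleteSpace E]

lemma leLowerIntegral_of_affine_le {p : α → E} (hp : Integrable p μ) {F : α → EReal}
    (L : StrongDual ℝ E) {r : ℝ}
    (h : ∀ᵐ x ∂μ, ((r + (L (p x) - L (∫ y, p y ∂μ)) : ℝ) : EReal) ≤ F x) :
    LeLowerIntegral μ F r := by
  have hLp : Integrable (fun x => L (p x) - L (∫ y, p y ∂μ)) μ :=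
    (L.integrable_comp hp).sub (integrable_const _)
  refine ⟨fun x => r + (L (p x) - L (∫ y, p y ∂μ)), (integrable_const r).add hLp, h, ?_⟩
  rw [integral_add (integrable_const r) hLp,
    integral_sub (L.integrable_comp hp) (integrable_const _), L.integral_comp_comm hp]
  simp

lemma ae_eq_of_ae_le_integral {p : α → E} (hp : Integrable p μ) (L : StrongDual ℝ E)
    (h : ∀ᵐ x ∂μ, L (p x) ≤ L (∫ y, p y ∂μ)) : ∀ᵐ x ∂μ, L (p x) = L (∫ y, p y ∂μ) :=
  (integral_eq_iff_of_ae_le (L.integrable_comp hp) (integrable_const _) h).mp (by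
    rw [L.integral_comp_comm hp]; simp)

lemma leLowerIntegral_of_nonvertical_separation {p : α → E} (hp : Integrable p μ)
    {F : α → EReal} {c : ℝ} (hc : ∀ x, (c : EReal) ≤ F x) (L : StrongDual ℝ E) {β r : ℝ}
    (hβ : β < 0) (hF : ∀ᵐ x ∂μ, F x ≠ ⊤ →
      L (p x) + (F x).toReal * β ≤ L (∫ y, p y ∂μ) + r * β) :
    LeLowerIntegral μ F r := by
  refine leLowerIntegral_of_affine_le hp ((-β)⁻¹ • L) (hF.mono fun x hx => ?_)
  rcases eq_or_ne (F x) ⊤ with hFx | hFx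
  · simp [hFx]
  have key : (-β)⁻¹ * (L (p x) - L (∫ y, p y ∂μ)) ≤ (F x).toReal - r := by
    rw [inv_mul_le_iff₀ (by linarith)]
    nlinarith [hx hFx]
  rw [← EReal.coe_toReal hFx fun h => by simpa [h] using hc x, EReal.coe_le_coe_iff]
  simp only [FunLike.coe_smul, Pi.smul_apply, smul_eq_mul, ← mul_sub]
  linarith

lemma leLowerIntegral_or_ae_eq_of_vertical_separation {p : α → E} (hp : Integrable p μ)
    {F : α → EReal} {c : ℝ} (hc : ∀ x, (c : EReal) ≤ F x) (L : StrongDual ℝ E)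
    (hF : ∀ᵐ x ∂μ, F x ≠ ⊤ → L (p x) ≤ L (∫ y, p y ∂μ)) (r : ℝ) :
    LeLowerIntegral μ F r ∨ ∀ᵐ x ∂μ, L (p x) = L (∫ y, p y ∂μ) := by
  set A := {x | L (∫ y, p y ∂μ) < L (p x)}
  by_cases hA : μ A = 0
  · refine Or.inr (ae_eq_of_ae_le_integral hp L ?_)
    rw [ae_iff]
    simpa only [not_le] using hA
  refine Or.inl (leLowerIntegral_of_ae_eq_top hc (nullMeasurableSet_lt aemeasurable_const
    (L.continuous.comp_aestronglyMeasurable hp.1).aemeasurable) hA (hF.mono fun x hx hxA => ?_) r)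
  by_contra hFx
  exact hxA.not_ge (hx hFx)

lemma leLowerIntegral_of_separation {p : α → E} (hp : Integrable p μ) {F : α → EReal} {c : ℝ}
    (hc : ∀ x, (c : EReal) ≤ F x) {W : Submodule ℝ E}
    (hW : ∀ K : Submodule ℝ E, (∀ᵐ x ∂μ, p x - ∫ y, p y ∂μ ∈ K) → W ≤ K)
    (ψ : StrongDual ℝ (E × ℝ)) {r : ℝ}
    (hF : ∀ᵐ x ∂μ, F x ≠ ⊤ → ψ (p x, (F x).toReal) ≤ ψ (∫ y, p y ∂μ, r))
    {y₀ : E} {t₀ : ℝ} (hy₀ : y₀ - ∫ y, p y ∂μ ∈ W) (hlt : ψ (y₀, t₀) < ψ (∫ y, p y ∂μ, r))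
    (hup : ∀ s : ℝ, 0 ≤ s → ψ ((y₀, t₀) + s • (0, 1)) ≤ ψ (∫ y, p y ∂μ, r)) :
    LeLowerIntegral μ F r := by
  set q := ∫ y, p y ∂μ
  set L := ψ.comp (ContinuousLinearMap.inl ℝ E ℝ)
  set β := ψ (0, 1)
  have hψ : ∀ y t, ψ (y, t) = L y + t * β := fun y t => by
    rw [show (y, t) = (y, 0) + t • ((0 : E), (1 : ℝ)) by simp, map_add, map_smul]; simp [L, β]
  simp only [hψ] at hF hlt
  have hβ : β ≤ 0 := ψ.toLinearMap.apply_nonpos_of_forall_le hup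
  rcases hβ.lt_or_eq with hβ | hβ
  · exact leLowerIntegral_of_nonvertical_separation hp hc L hβ hF
  refine (leLowerIntegral_or_ae_eq_of_vertical_separation hp hc L
    (by simpa only [hβ, mul_zero, add_zero] using hF) r).resolve_right fun hae => ?_
  have hWL : W ≤ LinearMap.ker (L : E →ₗ[ℝ] ℝ) := hW _ (hae.mono fun x hx => by simp [hx, q])
  have hLy₀ : L y₀ = L q := by simpa [sub_eq_zero] using hWL hy₀
  simp only [hβ, mul_zero, add_zero, hLy₀] at hlt
  exact lt_irrefl _ hlt

end LowerIntegral

section Jensen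

variable {α : Type*} [MeasurableSpace α] {μ : Measure α} [IsProbabilityMeasure μ]
  {E : Type*} [NormedAddCommGroup E] [NormedSpace ℝ E] [FiniteDimensional ℝ E]

theorem ERealConvex.leLowerIntegral_of_lt {g : E → EReal} (hg : ERealConvex g) {p : α → E}
    (hpi : Integrable p μ) {F : α → EReal} (hgF : ∀ x, g (p x) ≤ F x)
    {c : ℝ} (hc : ∀ x, (c : EReal) ≤ F x) {r : ℝ} (hr : r < g (∫ x, p x ∂μ)) :
    LeLowerIntegral μ F r := by
  set q := ∫ x, p x ∂μ
  obtain ⟨W, hpW, hWmin⟩ :=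
    (ae μ).exists_least_submodule_eventually_mem (R := ℝ) (fun x => p x - q)
  set P := AffineSubspace.mk' q W
  set S := {z : E × ℝ | z.1 ∈ P ∧ g z.1 ≤ z.2}
  have hSconv : Convex ℝ S :=
    (P.convex.linear_preimage (LinearMap.fst ℝ E ℝ)).inter hg.convex_epigraph
  have hFbot : ∀ x, F x ≠ ⊥ := fun x h => by simpa [h] using hc x
  have hFS : ∀ᵐ x ∂μ, F x ≠ ⊤ → (p x, (F x).toReal) ∈ S := by
    filter_upwards [hpW] with x hx hFx
    refine ⟨by simpa [P, AffineSubspace.mem_mk'] using hx, ?_⟩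
    rw [EReal.coe_toReal hFx (hFbot x)]
    exact hgF x
  rcases S.eq_empty_or_nonempty with hS | hS
  · refine leLowerIntegral_of_ae_eq_top hc nullMeasurableSet_univ (by simp)
      (hFS.mono fun x hx _ => ?_) r
    by_contra hFx
    simpa [hS] using hx hFx
  have hqr : (q, r) ∉ S := fun h => hr.not_ge h.2
  obtain ⟨ψ, hψS, ⟨y₀, t₀⟩, hz₀S, hz₀⟩ := hSconv.exists_dual_le_and_lt_of_notMem hS hqr
  refine leLowerIntegral_of_separation hpi hc hWmin ψ (hFS.mono fun x hx hFx => hψS _ (hx hFx))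
    (by simpa [P, AffineSubspace.mem_mk'] using hz₀S.1) hz₀ fun s hs => hψS _ ⟨?_, ?_⟩
  · simpa using hz₀S.1
  · simpa using hz₀S.2.trans (by exact_mod_cast by linarith)

end Jensen

lemma EReal.coe_ennreal_sInf_add (s : Set ℝ≥0∞) (c : ℝ) :
    ((sInf s : ℝ≥0∞) : EReal) + c = sInf ((fun x : ℝ≥0∞ => (x : EReal) + c) '' s) :=
  Monotone.map_sInf_of_continuousAt
    ((EReal.continuousAt_add (Or.inr (EReal.coe_ne_bot c)) (Or.inr (EReal.coe_ne_top c))).comp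
      (continuous_coe_ennreal_ereal.continuousAt.prodMk continuousAt_const))
    (fun _ _ h => add_le_add (EReal.coe_ennreal_le_coe_ennreal_iff.mpr h) le_rfl)
    (EReal.top_add_coe c)

section Polyconvex

variable {m n : ℕ}

instance : MeasurableSingletonClass (Matrix (Fin m) (Fin n) ℝ) :=
  inferInstanceAs (MeasurableSingletonClass (Fin m → Fin n → ℝ))

lemma ofReal_sub_le_er2e {w : ℝ} {x : EReal} (h : (w : EReal) ≤ x) (c : ℝ) :
    ENNReal.ofReal (w - c) ≤ er2e (x - c) := by
  induction x using EReal.rec with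
  | bot => simp at h
  | top => simp [er2e]
  | coe x =>
    rw [← EReal.coe_sub, er2e, if_neg (EReal.coe_ne_top _), EReal.toReal_coe]
    exact ENNReal.ofReal_le_ofReal (by linarith [EReal.coe_le_coe_iff.mp h])

lemma coe_er2e_sub_add {x : EReal} {c : ℝ} (h : (c : EReal) ≤ x) :
    (er2e (x - c) : EReal) + c = x := by
  induction x using EReal.rec with
  | bot => simp at h
  | top => simp [er2e]
  | coe x =>
    rw [← EReal.coe_sub, er2e, if_neg (EReal.coe_ne_top _), EReal.toReal_coe,
      EReal.coe_ennreal_ofReal, max_eq_left (by linarith [EReal.coe_le_coe_iff.mp h]),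
      ← EReal.coe_add, sub_add_cancel]

lemma LeLowerIntegral.coe_le_intE {μ : Measure (Matrix (Fin m) (Fin n) ℝ)}
    [IsProbabilityMeasure μ] {f : Matrix (Fin m) (Fin n) ℝ → EReal} {r : ℝ}
    (h : LeLowerIntegral μ f r) (c : ℝ) : (r : EReal) ≤ intE f c μ := by
  obtain ⟨w, hwi, hwf, hrw⟩ := h
  have hv : Integrable (fun Z => max (w Z - c) 0) μ := (hwi.sub (integrable_const c)).pos_part
  have hint : r - c ≤ ∫ Z, max (w Z - c) 0 ∂μ :=
    calc r - c ≤ ∫ Z, (w Z - c) ∂μ := by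
          rw [integral_sub hwi (integrable_const c)]; simpa using hrw
      _ ≤ _ := integral_mono (hwi.sub (integrable_const c)) hv fun Z => le_max_left _ _
  have hlint : ENNReal.ofReal (∫ Z, max (w Z - c) 0 ∂μ) ≤ ∫⁻ Z, er2e (f Z - c) ∂μ := by
    rw [ofReal_integral_eq_lintegral_ofReal hv (ae_of_all _ fun Z => le_max_right _ _)]
    exact lintegral_mono_ae (hwf.mono fun Z hZ => by simpa using ofReal_sub_le_er2e hZ c)
  calc (r : EReal) = ((r - c : ℝ) : EReal) + c := by rw [← EReal.coe_add, sub_add_cancel]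
    _ ≤ (ENNReal.ofReal (∫ Z, max (w Z - c) 0 ∂μ) : EReal) + c := by
        gcongr
        rw [EReal.coe_ennreal_ofReal]
        exact_mod_cast hint.trans (le_max_left _ _)
    _ ≤ intE f c μ := by
        rw [intE]
        gcongr
        exact EReal.coe_ennreal_le_coe_ennreal_iff.mpr hlint

def measuresWithMeanMinors (q : MinorIdx m n → ℝ) : Set (Measure (Matrix (Fin m) (Fin n) ℝ)) :=
  {μ | IsProbabilityMeasure μ ∧ (∀ ι, Integrable (fun Z => minors Z ι) μ) ∧
    ∀ ι, ∫ Z, minors Z ι ∂μ = q ι}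

lemma psiF_minors_le {f : Matrix (Fin m) (Fin n) ℝ → EReal} {c : ℝ}
    (hc : ∀ Z, (c : EReal) ≤ f Z) (X : Matrix (Fin m) (Fin n) ℝ) :
    psiF f c (minors X) ≤ f X := by
  refine sInf_le ⟨Measure.dirac X, inferInstance, fun ι => integrable_dirac (by simp),
    fun ι => integral_dirac _ X, ?_⟩
  rw [intE, lintegral_dirac, coe_er2e_sub_add (hc X)]

lemma le_psiF {f : Matrix (Fin m) (Fin n) ℝ → EReal} {c : ℝ} (hc : ∀ Z, (c : EReal) ≤ f Z)
    {g : (MinorIdx m n → ℝ) → EReal} (hg : ERealConvex g) (hgf : ∀ Z, g (minors Z) ≤ f Z)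
    (q : MinorIdx m n → ℝ) : g q ≤ psiF f c q := by
  refine le_sInf ?_
  rintro v ⟨μ, hμ, hint, hq, rfl⟩
  have hq' : ∫ Z, minors Z ∂μ = q := funext fun ι => (eval_integral hint ι).trans (hq ι)
  refine EReal.ge_of_forall_gt_iff_ge.mp fun r hr => ?_
  exact (hg.leLowerIntegral_of_lt (Integrable.of_eval hint) hgf hc (hq' ▸ hr)).coe_le_intE c

lemma mix_mem_measuresWithMeanMinors {μ₁ μ₂ : Measure (Matrix (Fin m) (Fin n) ℝ)}
    {a b : MinorIdx m n → ℝ} (h₁ : μ₁ ∈ measuresWithMeanMinors a)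
    (h₂ : μ₂ ∈ measuresWithMeanMinors b) {lam : ℝ} (h0 : 0 ≤ lam) (h1 : lam ≤ 1) :
    ENNReal.ofReal lam • μ₁ + ENNReal.ofReal (1 - lam) • μ₂ ∈
      measuresWithMeanMinors (lam • a + (1 - lam) • b) := by
  obtain ⟨hp₁, hi₁, hq₁⟩ := h₁
  obtain ⟨hp₂, hi₂, hq₂⟩ := h₂
  have hi : ∀ ι, Integrable (fun Z => minors Z ι) (ENNReal.ofReal lam • μ₁) ∧
      Integrable (fun Z => minors Z ι) (ENNReal.ofReal (1 - lam) • μ₂) := fun ι =>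
    ⟨(hi₁ ι).smul_measure ofReal_ne_top, (hi₂ ι).smul_measure ofReal_ne_top⟩
  refine ⟨⟨?_⟩, fun ι => (hi ι).1.add_measure (hi ι).2, fun ι => ?_⟩
  · simp [← ENNReal.ofReal_add h0 (sub_nonneg.mpr h1)]
  · rw [integral_add_measure (hi ι).1 (hi ι).2, integral_smul_measure, integral_smul_measure,
      toReal_ofReal h0, toReal_ofReal (sub_nonneg.mpr h1), hq₁, hq₂]
    simp

lemma iInf_lintegral_mix_le (Φ : Matrix (Fin m) (Fin n) ℝ → ℝ≥0∞) (a b : MinorIdx m n → ℝ)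
    {lam : ℝ} (h0 : 0 < lam) (h1 : lam < 1) :
    ⨅ μ ∈ measuresWithMeanMinors (lam • a + (1 - lam) • b), ∫⁻ Z, Φ Z ∂μ ≤
      ENNReal.ofReal lam * (⨅ μ ∈ measuresWithMeanMinors a, ∫⁻ Z, Φ Z ∂μ) +
        ENNReal.ofReal (1 - lam) * ⨅ μ ∈ measuresWithMeanMinors b, ∫⁻ Z, Φ Z ∂μ := by
  simp only [ENNReal.mul_iInf_of_ne (ENNReal.ofReal_pos.mpr h0).ne' ofReal_ne_top,
    ENNReal.mul_iInf_of_ne (ENNReal.ofReal_pos.mpr (sub_pos.mpr h1)).ne' ofReal_ne_top,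
    ENNReal.iInf_add, ENNReal.add_iInf]
  refine le_iInf₂ fun μ₂ h₂ => le_iInf₂ fun μ₁ h₁ => ?_
  refine iInf₂_le_of_le _ (mix_mem_measuresWithMeanMinors h₁ h₂ h0.le h1.le) (le_of_eq ?_)
  simp [lintegral_add_measure, lintegral_smul_measure]

lemma psiF_eq_iInf (f : Matrix (Fin m) (Fin n) ℝ → EReal) (c : ℝ) (q : MinorIdx m n → ℝ) :
    psiF f c q =
      ((⨅ μ ∈ measuresWithMeanMinors q, ∫⁻ Z, er2e (f Z - c) ∂μ : ℝ≥0∞) : EReal) + c := by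
  rw [← sInf_image, EReal.coe_ennreal_sInf_add, Set.image_image, psiF]
  congr 1
  ext v
  simp [measuresWithMeanMinors, intE, and_assoc, eq_comm]

lemma psiF_convex (f : Matrix (Fin m) (Fin n) ℝ → EReal) (c : ℝ) : ERealConvex (psiF f c) := by
  rw [show psiF f c = fun q => ((⨅ μ ∈ measuresWithMeanMinors q, ∫⁻ Z, er2e (f Z - c) ∂μ :
      ℝ≥0∞) : EReal) + c from funext (psiF_eq_iInf f c)]
  exact ERealConvex.coe_ennreal_add_const (fun a b _ h0 h1 =>
    iInf_lintegral_mix_le (fun Z => er2e (f Z - c)) a b h0 h1) c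

end Polyconvex

theorem stmt11_general (m n : ℕ)
    (f : Matrix (Fin m) (Fin n) ℝ → EReal)
    (c : ℝ) (hc : ∀ Z, (c : EReal) ≤ f Z)
    (X : Matrix (Fin m) (Fin n) ℝ) :
    psiF f c (minors X) ≤ f X
    ∧ (∀ (h : Matrix (Fin m) (Fin n) ℝ → EReal) (g : (MinorIdx m n → ℝ) → EReal),
        (∀ a b : MinorIdx m n → ℝ, ∀ lam : ℝ, 0 ≤ lam → lam ≤ 1 →
          g (lam • a + (1 - lam) • b) ≤ (lam : EReal) * g a + ((1 - lam : ℝ) : EReal) * g b) →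
        (∀ Z, h Z = g (minors Z)) →
        (∀ Z, h Z ≤ f Z) →
        h X ≤ psiF f c (minors X))
    ∧ psiF f c (minors X) =
        sSup {v : EReal | ∃ g : (MinorIdx m n → ℝ) → EReal,
          (∀ a b : MinorIdx m n → ℝ, ∀ lam : ℝ, 0 ≤ lam → lam ≤ 1 →
            g (lam • a + (1 - lam) • b) ≤ (lam : EReal) * g a + ((1 - lam : ℝ) : EReal) * g b) ∧
          (∀ Z, g (minors Z) ≤ f Z) ∧
          v = g (minors X)} := by
  refine ⟨psiF_minors_le hc X, fun h g hg hhg hhf => ?_, le_antisymm ?_ (sSup_le ?_)⟩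
  · rw [hhg X]
    exact le_psiF hc hg (fun Z => hhg Z ▸ hhf Z) _
  · exact le_sSup ⟨psiF f c, psiF_convex f c, psiF_minors_le hc, rfl⟩
  · rintro v ⟨g, hg, hgf, rfl⟩
    exact le_psiF hc hg hgf _

/-- `φ(X) = inf {∫ f dμ : ∫ p dμ = p(X)}` satisfies `φ ≤ f`, dominates every
polyconvex lower bound `h = g ∘ p ≤ f` of `f`, and hence equals the polyconvex
envelope of `f` (the pointwise sup of all polyconvex lower bounds). -/
theorem stmt11 (m n : ℕ) (hm : 1 ≤ m) (hn : 1 ≤ n)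
    (f : Matrix (Fin m) (Fin n) ℝ → EReal)
    (c : ℝ) (hc : ∀ Z, (c : EReal) ≤ f Z)
    (X : Matrix (Fin m) (Fin n) ℝ) :
    psiF f c (minors X) ≤ f X
    ∧ (∀ (h : Matrix (Fin m) (Fin n) ℝ → EReal) (g : (MinorIdx m n → ℝ) → EReal),
        (∀ a b : MinorIdx m n → ℝ, ∀ lam : ℝ, 0 ≤ lam → lam ≤ 1 →
          g (lam • a + (1 - lam) • b) ≤ (lam : EReal) * g a + ((1 - lam : ℝ) : EReal) * g b) →
        (∀ Z, h Z = g (minors Z)) →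
        (∀ Z, h Z ≤ f Z) →
        h X ≤ psiF f c (minors X))
    ∧ psiF f c (minors X) =
        sSup {v : EReal | ∃ g : (MinorIdx m n → ℝ) → EReal,
          (∀ a b : MinorIdx m n → ℝ, ∀ lam : ℝ, 0 ≤ lam → lam ≤ 1 →
            g (lam • a + (1 - lam) • b) ≤ (lam : EReal) * g a + ((1 - lam : ℝ) : EReal) * g b) ∧
          (∀ Z, g (minors Z) ≤ f Z) ∧
          v = g (minors X)} :=
  stmt11_general m n f c hc X
end
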